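/- Let q > 1 be a real number and x ≥ 0. Define the sequence (b_i) of nonnegative integers recursively: if b_k has been defined for all k < n, let b_n be the largest nonnegative integer satisfying b_1/q + ... + b_n/q^n ≤ x. Then Σ_{i≥1} b_i q^{−i} = x, and furthermore b_n < q for all n ≥ 2. -/

import Mathlib

/-- The next greedy digit with unbounded digits: the largest nonnegative integer `m`
with `s + m / q ^ (n+1) ≤ x`, where `s` is the value of the previously chosen digits. -/
noncomputable def gDigitU (q x s : ℝ) (n : ℕ) : ℕ :=
  sSup {m : ℕ | s + (m : ℝ) / q ^ (n + 1) ≤ x}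

/-- Partial sums of the greedy expansion of `x` in base `q` with unbounded digits. -/
noncomputable def gSumU (q x : ℝ) : ℕ → ℝ
  | 0 => 0
  | n + 1 => gSumU q x n + (gDigitU q x (gSumU q x n) n : ℝ) / q ^ (n + 1)

/-- `greedyU q x n` is the `(n+1)`-st digit (indexing from 0) of the greedy expansion
of `x` in base `q` with unbounded digits: recursively, it is the largest nonnegative
integer `b_n` with `b_1/q + ⋯ + b_n/q^n ≤ x`. -/
noncomputable def greedyU (q x : ℝ) (n : ℕ) : ℕ :=
  gDigitU q x (gSumU q x n) n

/-!
Each greedy digit is a floor: after the first `n` digits with partial sum `s ≤ x`, the next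
digit is `⌊(x - s) q^(n+1)⌋`. Hence the remainder `x - s` after `n ≥ 1` digits lies in
`[0, q^(-n))`, which gives convergence to `x` for `q > 1`, and the following digit is at most
`(x - s) q^(n+1) < q`.
-/

open Filter Topology Finset

theorem floor_mul_div_le {c t : ℝ} (hc : 0 < c) (ht : 0 ≤ t) : (⌊t * c⌋₊ : ℝ) / c ≤ t :=
  (div_le_iff₀ hc).2 (Nat.floor_le (by positivity))

theorem lt_floor_mul_add_one_div {c t : ℝ} (hc : 0 < c) : t < ((⌊t * c⌋₊ : ℝ) + 1) / c :=
  (lt_div_iff₀ hc).2 (Nat.lt_floor_add_one _)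

section
variable {q x s : ℝ} {n : ℕ}

theorem gDigitU_eq_floor (hq : 0 < q) (hs : s ≤ x) :
    gDigitU q x s n = ⌊(x - s) * q ^ (n + 1)⌋₊ := by
  have hc : 0 < q ^ (n + 1) := pow_pos hq _
  have hset : {m : ℕ | s + (m : ℝ) / q ^ (n + 1) ≤ x} = Set.Iic ⌊(x - s) * q ^ (n + 1)⌋₊ := by
    ext m
    rw [Set.mem_ofPred_eq, Set.mem_Iic, Nat.le_floor_iff (mul_nonneg (sub_nonneg.2 hs) hc.le),
      ← le_sub_iff_add_le', div_le_iff₀ hc]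
  rw [gDigitU, hset, csSup_Iic]

theorem gSumU_succ_eq (hq : 0 < q) (hs : gSumU q x n ≤ x) :
    gSumU q x (n + 1) = gSumU q x n + ⌊(x - gSumU q x n) * q ^ (n + 1)⌋₊ / q ^ (n + 1) := by
  rw [gSumU, gDigitU_eq_floor hq hs]

theorem gSumU_le (hq : 0 < q) (hx : 0 ≤ x) : ∀ n, gSumU q x n ≤ x
  | 0 => hx
  | n + 1 => by
    have hs := gSumU_le hq hx n
    rw [gSumU_succ_eq hq hs]
    linarith [floor_mul_div_le (pow_pos hq (n + 1)) (sub_nonneg.2 hs)]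

theorem sub_gSumU_succ_lt (hq : 0 < q) (hx : 0 ≤ x) (n : ℕ) :
    x - gSumU q x (n + 1) < (q ^ (n + 1))⁻¹ := by
  rw [gSumU_succ_eq hq (gSumU_le hq hx n)]
  have h := lt_floor_mul_add_one_div (t := x - gSumU q x n) (pow_pos hq (n + 1))
  rw [add_div, one_div] at h
  linarith

theorem greedyU_succ_lt (hq : 0 < q) (hx : 0 ≤ x) (n : ℕ) : (greedyU q x (n + 1) : ℝ) < q := by
  have hs := gSumU_le hq hx (n + 1)
  rw [greedyU, gDigitU_eq_floor hq hs]
  calc (⌊(x - gSumU q x (n + 1)) * q ^ (n + 1 + 1)⌋₊ : ℝ)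
      ≤ (x - gSumU q x (n + 1)) * q ^ (n + 1 + 1) :=
        Nat.floor_le (mul_nonneg (sub_nonneg.2 hs) (pow_pos hq _).le)
    _ < (q ^ (n + 1))⁻¹ * q ^ (n + 1 + 1) := by
        gcongr
        exact sub_gSumU_succ_lt hq hx n
    _ = q := by
        rw [pow_succ _ (n + 1), inv_mul_cancel_left₀ (pow_pos hq _).ne']

theorem sum_range_greedyU (q x : ℝ) :
    ∀ n, ∑ i ∈ range n, (greedyU q x i : ℝ) / q ^ (i + 1) = gSumU q x n
  | 0 => by simp [gSumU]
  | n + 1 => by rw [sum_range_succ, sum_range_greedyU q x n, greedyU, gSumU]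

theorem tendsto_gSumU (hq : 1 < q) (hx : 0 ≤ x) : Tendsto (gSumU q x) atTop (𝓝 x) := by
  have hq0 : 0 < q := one_pos.trans hq
  rw [← tendsto_add_atTop_iff_nat 1]
  have hgap : Tendsto (fun n : ℕ => (q ^ (n + 1))⁻¹) atTop (𝓝 0) :=
    tendsto_inv_atTop_zero.comp
      ((tendsto_pow_atTop_atTop_of_one_lt hq).comp (tendsto_add_atTop_nat 1))
  refine tendsto_of_tendsto_of_tendsto_of_le_of_le
    (by simpa using tendsto_const_nhds.sub hgap) tendsto_const_nhds
    (fun n => ?_) (fun n => gSumU_le hq0 hx (n + 1))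
  linarith [sub_gSumU_succ_lt hq0 hx n]

theorem hasSum_greedyU (hq : 1 < q) (hx : 0 ≤ x) :
    HasSum (fun i => (greedyU q x i : ℝ) / q ^ (i + 1)) x := by
  have hterm (i : ℕ) : 0 ≤ (greedyU q x i : ℝ) / q ^ (i + 1) :=
    div_nonneg (Nat.cast_nonneg _) (pow_pos (one_pos.trans hq) _).le
  rw [hasSum_iff_tendsto_nat_of_nonneg hterm]
  simpa only [sum_range_greedyU] using tendsto_gSumU hq hx

end

theorem greedyU_expansion (q x : ℝ) (hq : 1 < q) (hx : 0 ≤ x) :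
    (∑' i, (greedyU q x i : ℝ) / q ^ (i + 1) = x) ∧
    ∀ n, 1 ≤ n → (greedyU q x n : ℝ) < q := by
  refine ⟨(hasSum_greedyU hq hx).tsum_eq, fun n hn => ?_⟩
  obtain ⟨m, rfl⟩ := Nat.exists_eq_add_of_le' hn
  exact greedyU_succ_lt (one_pos.trans hq) hx m
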